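/- Let J be an iteration of wide trees with core C = dom J, and let C' be a tree with C ⊆ C' ⊆ wr(J). Define J' on C' by J'(s) = J(s) for s ∈ C, and J'(s) = J(proj_C(s))↾ₛ for s ∈ C' \ C, where proj_C(s) is the longest initial segment of s in C. Then J' is an iteration, J ⊆ J', and wr(J') = wr(J). -/

import Mathlib

/-!
On all of `C'` the extension is given by the single formula `J'(s) = J(proj_C s)↾ₛ`, because
`J(u)↾ᵤ = J(u)` for `u ∈ C`. Projections to `C` grow along `C'`, and passing from a node to a
successor outside `C` does not change the projection. The iteration axioms for `J'` thus reduce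
to two facts about restricted trees: the restriction of a wide tree to one of its nodes is wide
(its branching nodes are those of the tree above the node), and restricting at the unique
successor of a non-branching node gives the same tree. The wraps agree since every `s` in the
wrap of `J` lies in `J(proj_C u)` and extends `u`, hence lies in `J'(u)`.
-/

noncomputable section

/-- The type of countable ordinals, i.e. `ω₁` as a linearly ordered type. -/
abbrev W1 : Type := (Cardinal.aleph 1).ord.ToType

/-- A tree: a set of strings (finite sequences of countable ordinals)
closed under initial segments. -/
def IsTree (T : Set (List W1)) : Prop := ∀ s ∈ T, ∀ t : List W1, t <+: s → t ∈ T

/-- The set of immediate successors of `s` in `T`. -/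
def succs (T : Set (List W1)) (s : List W1) : Set (List W1) :=
  {t ∈ T | s <+: t ∧ t.length = s.length + 1}

/-- Branching nodes of `T`: nodes with at least two immediate successors. -/
def BN (T : Set (List W1)) : Set (List W1) :=
  {s ∈ T | 2 ≤ Cardinal.mk ↥(succs T s)}

/-- Branching nodes of `T` lying strictly below `s`. -/
def belowBN (T : Set (List W1)) (s : List W1) : Set (List W1) :=
  {u ∈ BN T | u <+: s ∧ u ≠ s}

/-- `BN_n(T)`: branching nodes with exactly `n` branching nodes strictly below. -/
def BNn (T : Set (List W1)) (n : ℕ) : Set (List W1) :=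
  {s ∈ BN T | (belowBN T s).Finite ∧ (belowBN T s).ncard = n}

/-- The restricted tree `T↾ₛ`. -/
def restr (T : Set (List W1)) (s : List W1) : Set (List W1) :=
  {t ∈ T | s <+: t ∨ t <+: s}

/-- A wide tree: nonempty tree, every node extends to a branching node,
and every branching node has `ℵ₁`-many immediate successors. -/
def Wide (T : Set (List W1)) : Prop :=
  T.Nonempty ∧ IsTree T ∧ (∀ s ∈ T, ∃ t ∈ BN T, s <+: t) ∧
    ∀ s ∈ BN T, Cardinal.mk ↥(succs T s) = Cardinal.aleph 1

/-- The initial segment `x↾m` of an infinite sequence. -/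
def seg (x : ℕ → W1) (m : ℕ) : List W1 := List.ofFn (fun i : Fin m => x i.1)

/-- `[T]`: the set of infinite branches of `T`. -/
def branches (T : Set (List W1)) : Set (ℕ → W1) := {x | ∀ m, seg x m ∈ T}

/-- `S ⊆_n T` : `BN_n(T) ⊆ S ⊆ T`. -/
def SubN (S T : Set (List W1)) (n : ℕ) : Prop := BNn T n ⊆ S ∧ S ⊆ T

/-- `S ⊆'_n T` : `S ⊆ T` and `BN_{n-1}(S) = BN_{n-1}(T)` (just `⊆` when `n = 0`). -/
def SubN' (S T : Set (List W1)) (n : ℕ) : Prop :=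
  S ⊆ T ∧ ∀ m : ℕ, n = m + 1 → BNn S m = BNn T m

/-- An iteration of wide trees with core (domain) `C`. -/
def IsIteration (C : Set (List W1)) (J : List W1 → Set (List W1)) : Prop :=
  IsTree C ∧ (∀ u ∈ C, Wide (J u)) ∧
  (∀ u ∈ C, ∀ v ∈ C, u <+: v → v ∈ J u ∧ J v ⊆ restr (J u) v) ∧
  (∀ u ∈ C, ∀ v ∈ C, u <+: v → v.length = u.length + 1 → u ∉ BN (J u) → J v = J u)

/-- The wrap of an iteration. -/
def wrap (C : Set (List W1)) (J : List W1 → Set (List W1)) : Set (List W1) :=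
  {s | ∀ u ∈ C, (u <+: s ∧ u ≠ s) → s ∈ J u}
/-- `u` is the projection of `s` to `C`: the longest initial segment of `s`
belonging to `C`. -/
def IsProj (C : Set (List W1)) (s u : List W1) : Prop :=
  u ∈ C ∧ u <+: s ∧ ∀ v ∈ C, v <+: s → v <+: u

section Trees

variable {T T' : Set (List W1)} {s t u v : List W1}

lemma mem_BN_iff : s ∈ BN T ↔ s ∈ T ∧ (succs T s).Nontrivial := by
  simp only [BN, Set.mem_ofPred_eq, Cardinal.two_le_iff, Set.Nontrivial]
  constructor
  · rintro ⟨hs, ⟨a, ha⟩, ⟨b, hb⟩, hab⟩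
    exact ⟨hs, a, ha, b, hb, fun h => hab (Subtype.ext h)⟩
  · rintro ⟨hs, a, ha, b, hb, hab⟩
    exact ⟨hs, ⟨a, ha⟩, ⟨b, hb⟩, fun h => hab (congrArg Subtype.val h)⟩

lemma subsingleton_succs_of_not_mem_BN (hs : s ∈ T) (hbn : s ∉ BN T) :
    (succs T s).Subsingleton :=
  Set.not_nontrivial_iff.1 fun h => hbn (mem_BN_iff.2 ⟨hs, h⟩)

lemma restr_mono (h : T ⊆ T') : restr T s ⊆ restr T' s := fun _ ht => ⟨h ht.1, ht.2⟩

lemma restr_restr_of_prefix (huv : u <+: v) : restr (restr T u) v = restr T v := by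
  ext t
  refine ⟨fun ht => ⟨ht.1.1, ht.2⟩, fun ht => ⟨⟨ht.1, ?_⟩, ht.2⟩⟩
  rcases ht.2 with hvt | htv
  · exact Or.inl (huv.trans hvt)
  · exact List.prefix_or_prefix_of_prefix huv htv

lemma succs_restr_of_prefix (hst : s <+: t) : succs (restr T s) t = succs T t := by
  ext t'
  exact ⟨fun ⟨ht', h⟩ => ⟨ht'.1, h⟩, fun ⟨ht', htt', hl⟩ =>
    ⟨⟨ht', Or.inl (hst.trans htt')⟩, htt', hl⟩⟩

/-- Below `s`, the only successor of `t` left in `T↾ₛ` is the initial segment of `s`. -/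
lemma subsingleton_succs_restr (hts : t <+: s) (hne : t ≠ s) :
    (succs (restr T s) t).Subsingleton := by
  have hlt : t.length < s.length :=
    lt_of_le_of_ne hts.length_le fun h => hne (hts.eq_of_length h)
  have key : ∀ x ∈ succs (restr T s) t, x = s.take (t.length + 1) := by
    rintro x ⟨⟨-, hcomp⟩, -, hlx⟩
    have hxs : x <+: s := by
      rcases hcomp with hsx | hxs
      · rw [hsx.eq_of_length (le_antisymm hsx.length_le (by omega))]
      · exact hxs
    rw [List.prefix_iff_eq_take.1 hxs, hlx]
  intro a ha b hb
  rw [key a ha, key b hb]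

lemma BN_restr : BN (restr T s) = {t ∈ BN T | s <+: t} := by
  ext t
  constructor
  · intro ht
    obtain ⟨⟨htT, hcomp⟩, hnt⟩ := mem_BN_iff.1 ht
    have hst : s <+: t := by
      rcases hcomp with hst | hts
      · exact hst
      · by_contra hst
        exact hnt.not_subsingleton
          (subsingleton_succs_restr hts fun h => hst (h ▸ List.prefix_refl t))
    rw [succs_restr_of_prefix hst] at hnt
    exact ⟨mem_BN_iff.2 ⟨htT, hnt⟩, hst⟩
  · rintro ⟨ht, hst⟩
    obtain ⟨htT, hnt⟩ := mem_BN_iff.1 ht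
    rw [← succs_restr_of_prefix hst] at hnt
    exact mem_BN_iff.2 ⟨⟨htT, Or.inl hst⟩, hnt⟩

lemma IsTree.restr (hT : IsTree T) : IsTree (restr T s) := by
  rintro t ⟨ht, hst | hts⟩ t' ht't
  · exact ⟨hT t ht t' ht't, List.prefix_or_prefix_of_prefix hst ht't⟩
  · exact ⟨hT t ht t' ht't, Or.inr (ht't.trans hts)⟩

lemma Wide.restr (hT : Wide T) (hs : s ∈ T) : Wide (restr T s) := by
  obtain ⟨-, htree, hbn, hcard⟩ := hT
  refine ⟨⟨s, hs, Or.inl (List.prefix_refl s)⟩, htree.restr, ?_, ?_⟩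
  · rintro t ⟨ht, hst | hts⟩
    · obtain ⟨b, hb, htb⟩ := hbn t ht
      exact ⟨b, BN_restr ▸ ⟨hb, hst.trans htb⟩, htb⟩
    · obtain ⟨b, hb, hsb⟩ := hbn s hs
      exact ⟨b, BN_restr ▸ ⟨hb, hsb⟩, hts.trans hsb⟩
  · intro t ht
    rw [BN_restr] at ht
    rw [succs_restr_of_prefix ht.2]
    exact hcard t ht.1

lemma restr_eq_of_mem_succs_of_not_mem_BN (hT : IsTree T) (hv : v ∈ succs T u)
    (hbn : u ∉ BN T) : restr T v = restr T u := by
  obtain ⟨hvT, huv, hl⟩ := hv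
  have hsub := subsingleton_succs_of_not_mem_BN (hT v hvT u huv) hbn
  ext t
  refine ⟨fun ⟨ht, h⟩ => ⟨ht, ?_⟩, fun ⟨ht, h⟩ => ⟨ht, ?_⟩⟩
  · rcases h with hvt | htv
    · exact Or.inl (huv.trans hvt)
    · exact List.prefix_or_prefix_of_prefix huv htv
  · rcases h with hut | htu
    · rcases Nat.lt_or_ge u.length t.length with hlt | hge
      · have htake : t.take (u.length + 1) <+: t := List.take_prefix _ _
        have hsucc : t.take (u.length + 1) ∈ succs T u :=
          ⟨hT t ht _ htake, List.prefix_take_iff.2 ⟨hut, by omega⟩,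
            by rw [List.length_take]; omega⟩
        exact Or.inl (hsub hsucc ⟨hvT, huv, hl⟩ ▸ htake)
      · exact Or.inr ((hut.eq_of_length (le_antisymm hut.length_le hge)) ▸ huv)
    · exact Or.inr (htu.trans huv)

end Trees

section Projection

variable {C : Set (List W1)} {s u v p : List W1}

lemma exists_isProj (hC : IsTree C) (hCne : C.Nonempty) (s : List W1) : ∃ p, IsProj C s p := by
  classical
  obtain ⟨c, hc⟩ := hCne
  have h0 : s.take 0 ∈ C := hC c hc _ List.nil_prefix
  set N := Nat.findGreatest (fun n => s.take n ∈ C) s.length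
  have hN : s.take N ∈ C :=
    Nat.findGreatest_spec (P := fun n => s.take n ∈ C) (Nat.zero_le _) h0
  refine ⟨s.take N, hN, List.take_prefix N s, ?_⟩
  intro v hv hvs
  have hvN : v.length ≤ N :=
    Nat.le_findGreatest hvs.length_le (List.prefix_iff_eq_take.1 hvs ▸ hv)
  exact List.prefix_take_iff.2 ⟨hvs, hvN⟩

lemma isProj_self (hs : s ∈ C) : IsProj C s s := ⟨hs, List.prefix_refl s, fun _ _ h => h⟩

lemma IsProj.eq_of_mem (hp : IsProj C s p) (hs : s ∈ C) : p = s :=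
  hp.2.1.eq_of_length (le_antisymm hp.2.1.length_le (hp.2.2 s hs (List.prefix_refl s)).length_le)

lemma IsProj.of_succ (hp : IsProj C u p) (hv : v ∉ C) (huv : u <+: v)
    (hl : v.length = u.length + 1) : IsProj C v p := by
  refine ⟨hp.1, hp.2.1.trans huv, fun w hw hwv => hp.2.2 w hw ?_⟩
  have hlt : w.length < v.length :=
    lt_of_le_of_ne hwv.length_le fun h => hv (hwv.eq_of_length h ▸ hw)
  exact List.prefix_of_prefix_length_le hwv huv (by omega)

end Projection

namespace IsIteration

variable {C : Set (List W1)} {J : List W1 → Set (List W1)} {s u v p : List W1}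

lemma mem_self (hJ : IsIteration C J) (hu : u ∈ C) : u ∈ J u :=
  (hJ.2.2.1 u hu u hu (List.prefix_refl u)).1

lemma restr_self (hJ : IsIteration C J) (hu : u ∈ C) : restr (J u) u = J u :=
  Set.Subset.antisymm (fun _ ht => ht.1) (hJ.2.2.1 u hu u hu (List.prefix_refl u)).2

lemma antitone (hJ : IsIteration C J) (hu : u ∈ C) (hv : v ∈ C) (huv : u <+: v) :
    J v ⊆ J u :=
  fun _ ht => ((hJ.2.2.1 u hu v hv huv).2 ht).1

lemma mem_of_mem_wrap (hJ : IsIteration C J) (hs : s ∈ wrap C J) (hp : IsProj C s p) :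
    s ∈ J p := by
  by_cases hps : p = s
  · exact hps ▸ hJ.mem_self hp.1
  · exact hs p hp.1 ⟨hp.2.1, hps⟩

end IsIteration

/-- The paper's two-case definition of `J'` in one formula: for `s ∈ C` the projection is `s`
itself and `J(s)↾ₛ = J(s)`. -/
def IsProjExtension (C C' : Set (List W1)) (J J' : List W1 → Set (List W1)) : Prop :=
  ∀ s ∈ C', ∀ p, IsProj C s p → J' s = restr (J p) s

namespace IsProjExtension

variable {C C' : Set (List W1)} {J J' : List W1 → Set (List W1)}

lemma of_agree (hJ : IsIteration C J) (hagree : ∀ s ∈ C, J' s = J s)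
    (hnew : ∀ s ∈ C' \ C, ∀ u, IsProj C s u → J' s = restr (J u) s) :
    IsProjExtension C C' J J' := by
  intro s hs p hp
  by_cases hsC : s ∈ C
  · rw [hagree s hsC, hp.eq_of_mem hsC, hJ.restr_self hsC]
  · exact hnew s ⟨hs, hsC⟩ p hp

lemma wide (hJ' : IsProjExtension C C' J J') (hJ : IsIteration C J) (hCne : C.Nonempty)
    (h2 : C' ⊆ wrap C J) : ∀ s ∈ C', Wide (J' s) := by
  intro s hs
  obtain ⟨p, hp⟩ := exists_isProj hJ.1 hCne s
  rw [hJ' s hs p hp]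
  exact (hJ.2.1 p hp.1).restr (hJ.mem_of_mem_wrap (h2 hs) hp)

lemma mem_and_subset_restr (hJ' : IsProjExtension C C' J J') (hJ : IsIteration C J)
    (hCne : C.Nonempty) (h2 : C' ⊆ wrap C J) :
    ∀ u ∈ C', ∀ v ∈ C', u <+: v → v ∈ J' u ∧ J' v ⊆ restr (J' u) v := by
  intro u hu v hv huv
  obtain ⟨p, hp⟩ := exists_isProj hJ.1 hCne u
  obtain ⟨q, hq⟩ := exists_isProj hJ.1 hCne v
  have hJqp : J q ⊆ J p := hJ.antitone hp.1 hq.1 (hq.2.2 p hp.1 (hp.2.1.trans huv))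
  rw [hJ' u hu p hp, hJ' v hv q hq, restr_restr_of_prefix huv]
  exact ⟨⟨hJqp (hJ.mem_of_mem_wrap (h2 hv) hq), Or.inl huv⟩, restr_mono hJqp⟩

lemma eq_of_not_mem_BN (hJ' : IsProjExtension C C' J J') (hJ : IsIteration C J)
    (hCne : C.Nonempty) (h2 : C' ⊆ wrap C J) :
    ∀ u ∈ C', ∀ v ∈ C', u <+: v → v.length = u.length + 1 → u ∉ BN (J' u) →
      J' v = J' u := by
  intro u hu v hv huv hl hbn
  by_cases hvC : v ∈ C
  · have huC : u ∈ C := hJ.1 v hvC u huv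
    rw [hJ' u hu u (isProj_self huC), hJ.restr_self huC] at hbn ⊢
    rw [hJ' v hv v (isProj_self hvC), hJ.restr_self hvC]
    exact hJ.2.2.2 u huC v hvC huv hl hbn
  · obtain ⟨p, hp⟩ := exists_isProj hJ.1 hCne u
    have hq : IsProj C v p := hp.of_succ hvC huv hl
    rw [hJ' u hu p hp] at hbn ⊢
    rw [hJ' v hv p hq]
    have hbnp : u ∉ BN (J p) := fun h => hbn (BN_restr ▸ ⟨h, List.prefix_refl u⟩)
    exact restr_eq_of_mem_succs_of_not_mem_BN (hJ.2.1 p hp.1).2.1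
      ⟨hJ.mem_of_mem_wrap (h2 hv) hq, huv, hl⟩ hbnp

lemma wrap_eq (hJ' : IsProjExtension C C' J J') (hJ : IsIteration C J) (hCne : C.Nonempty)
    (h1 : C ⊆ C') : wrap C' J' = wrap C J := by
  ext s
  refine ⟨fun hs u hu hus => ?_, fun hs u hu ⟨hus, hne⟩ => ?_⟩
  · have hsu := hs u (h1 hu) hus
    rwa [hJ' u (h1 hu) u (isProj_self hu), hJ.restr_self hu] at hsu
  · obtain ⟨p, hp⟩ := exists_isProj hJ.1 hCne u
    have hps : p ≠ s := fun hps =>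
      hne (hus.eq_of_length (le_antisymm hus.length_le (hps ▸ hp.2.1).length_le))
    rw [hJ' u hu p hp]
    exact ⟨hs p hp.1 ⟨hp.2.1.trans hus, hps⟩, Or.inl hus⟩

end IsProjExtension

/-- the natural extension of an iteration to a larger core
`C ⊆ C' ⊆ wr(J)` is an iteration with the same wrap. -/
theorem stmt11 (C C' : Set (List W1)) (J J' : List W1 → Set (List W1))
    (hJ : IsIteration C J) (hCne : C.Nonempty) (hC' : IsTree C')
    (h1 : C ⊆ C') (h2 : C' ⊆ wrap C J)
    (hagree : ∀ s ∈ C, J' s = J s)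
    (hnew : ∀ s ∈ C' \ C, ∀ u, IsProj C s u → J' s = restr (J u) s) :
    IsIteration C' J' ∧ wrap C' J' = wrap C J := by
  have hJ' : IsProjExtension C C' J J' := .of_agree hJ hagree hnew
  exact ⟨⟨hC', hJ'.wide hJ hCne h2, hJ'.mem_and_subset_restr hJ hCne h2,
    hJ'.eq_of_not_mem_BN hJ hCne h2⟩, hJ'.wrap_eq hJ hCne h1⟩

end
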